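/- arXiv:1510.08222 — 3 statements merged into one kernel-verified Lean document; each statement's English description precedes it below -/
import Mathlib

section
/- If b = 2, then the singular points of the hypersurface t(x) = 2, where t = -2 + x₁² + x₂² - x₁x₂x₃ + x₃², are exactly the four points (2,2,2), (2,-2,-2), (-2,2,-2), (-2,-2,2). -/
/-!
At a critical point `2x = yz`, `2y = xz`, `2z = xy`; comparing `x · 2x = xyz = y · 2y = z · 2z`
gives `x² = y² = z²`, and then `t = 2` reads `x² = 4`. The signs of `x` and `y` are free and
`z = xy / 2` is determined by them, which yields exactly four points.
-/

open MvPolynomial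

/-- The boundary trace polynomial of the one-holed torus. -/
noncomputable def t : MvPolynomial (Fin 3) ℂ :=
  -2 + X 0 ^ 2 + X 1 ^ 2 - X 0 * X 1 * X 2 + X 2 ^ 2

theorem MvPolynomial.pderiv_ofNat {R σ : Type*} [CommSemiring R] (i : σ) (n : ℕ) [n.AtLeastTwo] :
    pderiv i (ofNat(n) : MvPolynomial σ R) = 0 :=
  (pderiv i).map_natCast n

theorem cayley_cubic_critical_iff {K : Type*} [Field K] [NeZero (2 : K)] {x y z : K} :
    (x ^ 2 + y ^ 2 + z ^ 2 - x * y * z = 4 ∧ 2 * x = y * z ∧ 2 * y = x * z ∧ 2 * z = x * y) ↔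
      (x = 2 ∧ y = 2 ∧ z = 2) ∨ (x = 2 ∧ y = -2 ∧ z = -2) ∨ (x = -2 ∧ y = 2 ∧ z = -2) ∨
        (x = -2 ∧ y = -2 ∧ z = 2) := by
  constructor
  · rintro ⟨h, hx, hy, hz⟩
    have h2 : (2 : K) ≠ 0 := NeZero.ne 2
    have hxy : x ^ 2 = y ^ 2 := mul_left_cancel₀ h2 (by linear_combination x * hx - y * hy)
    have hxz : x ^ 2 = z ^ 2 := mul_left_cancel₀ h2 (by linear_combination x * hx - z * hz)
    have hx4 : x ^ 2 = 2 ^ 2 := by linear_combination h + hxy + hxz - x * hx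
    rcases sq_eq_sq_iff_eq_or_eq_neg.mp hx4 with rfl | rfl <;>
      rcases sq_eq_sq_iff_eq_or_eq_neg.mp (hxy.symm.trans hx4) with rfl | rfl
    · exact .inl ⟨rfl, rfl, mul_left_cancel₀ h2 (by linear_combination hz)⟩
    · exact .inr <| .inl ⟨rfl, rfl, mul_left_cancel₀ h2 (by linear_combination hz)⟩
    · exact .inr <| .inr <| .inl ⟨rfl, rfl, mul_left_cancel₀ h2 (by linear_combination hz)⟩
    · exact .inr <| .inr <| .inr ⟨rfl, rfl, mul_left_cancel₀ h2 (by linear_combination hz)⟩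
  · rintro (⟨rfl, rfl, rfl⟩ | ⟨rfl, rfl, rfl⟩ | ⟨rfl, rfl, rfl⟩ | ⟨rfl, rfl, rfl⟩) <;> norm_num

theorem eval_t (p : Fin 3 → ℂ) :
    eval p t = -2 + p 0 ^ 2 + p 1 ^ 2 - p 0 * p 1 * p 2 + p 2 ^ 2 := by
  simp [t]

theorem pderiv_zero_t : pderiv 0 t = 2 * X 0 - X 1 * X 2 := by
  simp only [t, map_add, map_sub, map_neg, pderiv_ofNat, Derivation.leibniz_pow,
    Derivation.leibniz, pderiv_X, Pi.single_apply, Fin.reduceEq, ↓reduceIte, smul_eq_mul,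
    nsmul_eq_mul]
  ring

theorem pderiv_one_t : pderiv 1 t = 2 * X 1 - X 0 * X 2 := by
  simp only [t, map_add, map_sub, map_neg, pderiv_ofNat, Derivation.leibniz_pow,
    Derivation.leibniz, pderiv_X, Pi.single_apply, Fin.reduceEq, ↓reduceIte, smul_eq_mul,
    nsmul_eq_mul]
  ring

theorem pderiv_two_t : pderiv 2 t = 2 * X 2 - X 0 * X 1 := by
  simp only [t, map_add, map_sub, map_neg, pderiv_ofNat, Derivation.leibniz_pow,
    Derivation.leibniz, pderiv_X, Pi.single_apply, Fin.reduceEq, ↓reduceIte, smul_eq_mul,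
    nsmul_eq_mul]
  ring

/-- For `b = 2`, the singular points of `{t = 2}` are exactly the four listed points. -/
theorem stmt_4 :
    {p : Fin 3 → ℂ | eval p t = 2 ∧ ∀ i : Fin 3, eval p (pderiv i t) = 0} =
      {![2, 2, 2], ![2, -2, -2], ![-2, 2, -2], ![-2, -2, 2]} := by
  ext p
  simp only [Set.mem_ofPred_eq, Set.mem_insert_iff, Set.mem_singleton_iff, funext_iff,
    Fin.forall_fin_succ, Fin.succ_zero_eq_one, Fin.succ_one_eq_two, IsEmpty.forall_iff, and_true,
    Matrix.cons_val_zero, Matrix.cons_val_succ, Matrix.cons_val_fin_one, eval_t, pderiv_zero_t,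
    pderiv_one_t, pderiv_two_t, map_sub, map_mul, eval_ofNat, eval_X, sub_eq_zero]
  rw [← cayley_cubic_critical_iff]
  exact and_congr_left' ⟨fun h => by linear_combination h, fun h => by linear_combination h⟩
end

section
/- Let t = -2 + x₁² + x₂² - x₁x₂x₃ + x₃² and b ∈ ℂ. For a = (a₁,a₂,a₃) ∈ ℤ≥0³ with a₂ > 0 and a₃ > 0, and s = a - (0,1,1), the 3-form d((t - b)·x^s dx₂∧dx₃) equals -((a₁+1)x^a + v)·dx₁∧dx₂∧dx₃ for some polynomial v of total degree strictly less than |a| = a₁+a₂+a₃. -/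
/-!
Since `∂₁(t - b) = 2x₁ - x₂x₃` and `x₁ ∂₁ x^s = s₁ x^s`, splitting
`t - b = x₁(x₁ - x₂x₃) + (x₂² + x₃² - 2 - b)` gives
`∂₁((t - b) x^s) = -(s₁ + 1) x₂x₃ x^s + (s₁ + 2) x₁ x^s + (x₂² + x₃² - 2 - b) ∂₁ x^s`.
Here `x₂x₃ x^s = x^a`, and the other two terms have degree `< |s| + 2 = |a|` because `∂₁`
strictly lowers the total degree of any polynomial it does not kill.
-/

open MvPolynomial

namespace MvPolynomial

variable {σ R : Type*} [CommSemiring R]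

theorem totalDegree_pderiv_lt {i : σ} {p : MvPolynomial σ R} (h : pderiv i p ≠ 0) :
    (pderiv i p).totalDegree < p.totalDegree := by
  classical
  obtain ⟨m, hm, hdeg⟩ := (pderiv i p).support.exists_mem_eq_sup
    (support_nonempty.mpr h) fun m => m.sum fun _ e => e
  have hcoeff : coeff (m + Finsupp.single i 1) p ≠ 0 := by
    rw [mem_support_iff, coeff_pderiv] at hm
    exact left_ne_zero_of_mul hm
  calc (pderiv i p).totalDegree = m.sum (fun _ e => e) := hdeg
    _ < (m + Finsupp.single i 1).sum fun _ e => e := by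
      rw [Finsupp.sum_add_index' (fun _ => rfl) (fun _ _ _ => rfl), Finsupp.sum_single_index rfl]
      omega
    _ ≤ p.totalDegree := le_totalDegree (mem_support_iff.mpr hcoeff)

theorem totalDegree_mul_pderiv_lt {i : σ} {p q : MvPolynomial σ R} {n : ℕ} (hn : 0 < n)
    (h : q.totalDegree + p.totalDegree ≤ n) : (q * pderiv i p).totalDegree < n := by
  by_cases hp : pderiv i p = 0
  · rwa [hp, mul_zero, totalDegree_zero]
  · have := totalDegree_pderiv_lt hp
    exact (totalDegree_mul _ _).trans_lt (by omega)

theorem totalDegree_C_mul_X_mul_le [Nontrivial R] (c : R) (i : σ) (p : MvPolynomial σ R) :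
    (C c * (X i * p)).totalDegree ≤ p.totalDegree + 1 := by
  refine (totalDegree_mul _ _).trans ?_
  rw [totalDegree_C, zero_add, add_comm]
  exact (totalDegree_mul _ _).trans_eq (by rw [totalDegree_X])

end MvPolynomial

theorem t_sub_C_eq (b : ℂ) :
    t - C b = X 0 * (X 0 - X 1 * X 2) + (X 1 ^ 2 + X 2 ^ 2 - C (2 + b)) := by
  rw [t, map_add, map_ofNat]
  ring

theorem pderiv_zero_t_sub_C (b : ℂ) : pderiv 0 (t - C b) = 2 * X 0 - X 1 * X 2 := by
  have h0 : pderiv 0 (2 : MvPolynomial (Fin 3) ℂ) = 0 := by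
    exact_mod_cast (pderiv 0).map_natCast 2
  have h1 : pderiv 0 (X 1 : MvPolynomial (Fin 3) ℂ) = 0 := pderiv_X_of_ne (by decide)
  have h2 : pderiv 0 (X 2 : MvPolynomial (Fin 3) ℂ) = 0 := pderiv_X_of_ne (by decide)
  simp only [t, map_add, map_sub, map_neg, pderiv_C, pderiv_mul, pderiv_pow, pderiv_X_self, h0,
    h1, h2]
  ring

theorem pderiv_zero_t_sub_C_mul_monomial (b : ℂ) (s : Fin 3 →₀ ℕ) :
    pderiv 0 ((t - C b) * monomial s 1) =
      -(C ((s 0 : ℂ) + 1) * (X 1 * X 2 * monomial s 1) +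
        -(C ((s 0 : ℂ) + 2) * (X 0 * monomial s 1) +
          (X 1 ^ 2 + X 2 ^ 2 - C (2 + b)) * pderiv 0 (monomial s 1))) := by
  have hXm : X 0 * pderiv 0 (monomial s 1) = (s 0 : MvPolynomial (Fin 3) ℂ) * monomial s 1 := by
    rw [X_mul_pderiv_monomial, nsmul_eq_mul]
  rw [pderiv_mul, pderiv_zero_t_sub_C, t_sub_C_eq]
  simp only [map_add, map_natCast, map_ofNat, map_one]
  linear_combination (X 0 - X 1 * X 2) * hXm

theorem single_one_add_single_two_add_eq (a : Fin 3 → ℕ) (h2 : 0 < a 1) (h3 : 0 < a 2) :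
    Finsupp.single 1 1 + Finsupp.single 2 1 +
        Finsupp.equivFunOnFinite.symm ![a 0, a 1 - 1, a 2 - 1] =
      Finsupp.equivFunOnFinite.symm a := by
  ext j
  fin_cases j <;> simp only [Finsupp.coe_add, Pi.add_apply, Finsupp.single_apply] <;> simp <;> omega

theorem degree_add_two_eq (a : Fin 3 → ℕ) (h2 : 0 < a 1) (h3 : 0 < a 2) :
    (Finsupp.equivFunOnFinite.symm ![a 0, a 1 - 1, a 2 - 1]).degree + 2 = a 0 + a 1 + a 2 := by
  have := congrArg Finsupp.degree (single_one_add_single_two_add_eq a h2 h3)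
  rw [map_add, map_add, Finsupp.degree_single, Finsupp.degree_single,
    Finsupp.degree_eq_sum (Finsupp.equivFunOnFinite.symm a), Fin.sum_univ_three] at this
  exact (add_comm _ _).trans this

/-- `d(f dx₂∧dx₃) = (∂₁ f) dx₁∧dx₂∧dx₃`, so the 3-form is recorded by its coefficient `∂₁ f`. -/
theorem stmt_6 (b : ℂ) (a : Fin 3 → ℕ) (h2 : 0 < a 1) (h3 : 0 < a 2) :
    ∃ v : MvPolynomial (Fin 3) ℂ,
      pderiv 0 ((t - C b) *
          monomial (Finsupp.equivFunOnFinite.symm ![a 0, a 1 - 1, a 2 - 1]) 1) =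
        -(C ((a 0 : ℂ) + 1) * monomial (Finsupp.equivFunOnFinite.symm a) 1 + v) ∧
      v.totalDegree < a 0 + a 1 + a 2 := by
  have hdeg := degree_add_two_eq a h2 h3
  set s := Finsupp.equivFunOnFinite.symm ![a 0, a 1 - 1, a 2 - 1]
  have hXXm : X 1 * X 2 * monomial s 1 = monomial (Finsupp.equivFunOnFinite.symm a) (1 : ℂ) := by
    rw [← single_one_add_single_two_add_eq a h2 h3, X, X, monomial_mul, monomial_mul, one_mul,
      one_mul]
  have hmdeg : (monomial s (1 : ℂ)).totalDegree ≤ s.degree := totalDegree_monomial_le s 1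
  have hrdeg : (X 1 ^ 2 + X 2 ^ 2 - C (2 + b) : MvPolynomial (Fin 3) ℂ).totalDegree ≤ 2 :=
    (totalDegree_sub _ _).trans <|
      max_le ((totalDegree_add _ _).trans <| by simp) (by rw [totalDegree_C]; omega)
  refine ⟨-(C ((s 0 : ℂ) + 2) * (X 0 * monomial s 1) +
    (X 1 ^ 2 + X 2 ^ 2 - C (2 + b)) * pderiv 0 (monomial s 1)), ?_, ?_⟩
  · rw [pderiv_zero_t_sub_C_mul_monomial, hXXm]
    rfl
  rw [totalDegree_neg]
  refine (totalDegree_add _ _).trans_lt (max_lt ?_ (totalDegree_mul_pderiv_lt (by omega) ?_))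
  · have := totalDegree_C_mul_X_mul_le ((s 0 : ℂ) + 2) 0 (monomial s 1)
    omega
  · omega
end

section
/- Let t = -2 + x₁² + x₂² - x₁x₂x₃ + x₃² over the ring ℂ[x₁,x₂,x₃][ (t²-4)^{-1} ], and define the 2-form η = [(t-2)x₁ dx₂∧dx₃ + x₃(x₃²-4) dx₁∧dx₂ + (2x₁x₃ + 2x₂ - t·x₂ - x₂x₃²) dx₁∧dx₃] / (2(t²-4)). Then η ∧ dt = dx₁∧dx₂∧dx₃. -/
open MvPolynomial

/-- Embedding of `ℂ[x₁,x₂,x₃]` into its fraction field (which contains the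
localization at `t² - 4`). -/
noncomputable def φ : MvPolynomial (Fin 3) ℂ →+* FractionRing (MvPolynomial (Fin 3) ℂ) :=
  algebraMap _ _

lemma Derivation.map_ofNat {R A M : Type*} [CommSemiring R] [CommSemiring A] [AddCommMonoid M]
    [Algebra R A] [Module A M] [Module R M] (D : Derivation R A M) (n : ℕ) [n.AtLeastTwo] :
    D (ofNat(n) : A) = 0 :=
  D.map_natCast n

-- At `x = (1, 1, 1)` one has `t = 0`, so `t² - 4 = -4`.
lemma t_sq_sub_four_ne_zero : t ^ 2 - 4 ≠ 0 := fun h => by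
  replace h := congrArg (eval fun _ => (1 : ℂ)) h
  norm_num [t] at h

lemma wedge_dt_numerator_eq :
    (t - 2) * X 0 * pderiv 0 t
      - (2 * X 0 * X 2 + 2 * X 1 - t * X 1 - X 1 * X 2 ^ 2) * pderiv 1 t
      + X 2 * (X 2 ^ 2 - 4) * pderiv 2 t = 2 * (t ^ 2 - 4) := by
  simp only [t, map_add, map_sub, map_neg, Derivation.map_ofNat, Derivation.leibniz,
    Derivation.leibniz_pow, pderiv_X, Pi.single_apply, Fin.reduceEq, if_true, if_false, smul_eq_mul,
    nsmul_eq_mul]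
  ring

/-- `η ∧ dt = dx₁∧dx₂∧dx₃`, where
`η = [(t-2)x₁ dx₂₃ + x₃(x₃²-4) dx₁₂ + (2x₁x₃+2x₂-tx₂-x₂x₃²) dx₁₃] / (2(t²-4))`.
Since `(f dx₂₃ + g dx₁₃ + h dx₁₂) ∧ dt = (f ∂₁t - g ∂₂t + h ∂₃t) dx₁₂₃`, the claim is
that this coefficient equals `1` in the localization at `t² - 4`. -/
theorem stmt_8 :
    ((φ t - 2) * φ (X 0) / (2 * (φ t ^ 2 - 4))) * φ (pderiv 0 t)
      - ((2 * φ (X 0) * φ (X 2) + 2 * φ (X 1) - φ t * φ (X 1) - φ (X 1) * φ (X 2) ^ 2) /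
          (2 * (φ t ^ 2 - 4))) * φ (pderiv 1 t)
      + (φ (X 2) * (φ (X 2) ^ 2 - 4) / (2 * (φ t ^ 2 - 4))) * φ (pderiv 2 t) = 1 := by
  have hden : 2 * (φ t ^ 2 - 4) ≠ 0 := by
    refine mul_ne_zero two_ne_zero ?_
    simpa [map_ofNat] using
      (map_ne_zero_iff φ (IsFractionRing.injective _ _)).mpr t_sq_sub_four_ne_zero
  have hnum := congrArg φ wedge_dt_numerator_eq
  simp only [map_add, map_sub, map_mul, map_pow, map_ofNat] at hnum
  rw [div_mul_eq_mul_div, div_mul_eq_mul_div, div_mul_eq_mul_div, div_sub_div_same, ← add_div,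
    hnum, div_self hden]
end
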